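/- Let f be a nonzero element of the fraction field Frac(A), written as f = p/q with p, q ∈ A, q ≠ 0. Then there exists a nonzero element h ∈ A such that: (i) there exists a k-algebra homomorphism g : A → k with g(h) ≠ 0; and (ii) for every k-algebra homomorphism g : A → k with g(h) ≠ 0 one has x(g•q) ≠ 0, and the quotient ‖x(g•p)‖ / ‖x(g•q)‖ takes the same value for all such g; moreover this common value does not depend on the chosen representation f = p/q. -/

import Mathlib

/-!
For `a ≠ 0` the element `t = ∑ a₍₁₎ ⊗ x a₍₂₎` of `A ⊗ L` is nonzero (in the convolution algebra
the antipode inverts `x`), and `x (g • a) = (g ⊗ id) t`. Writing `t = ∑ cᵢ ⊗ bᵢ` over a `k`-basis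
of `L`, the values `v ((g ⊗ id) t) = v (∑ g(cᵢ) bᵢ)` lie in a finite set, because an ultrametric
valuation trivial on `k` takes finitely many values on a finite-dimensional space. The points
where the maximum `γ` is not attained satisfy a nontrivial linear relation `ξ (g(cᵢ))ᵢ = 0`,
that is `g h = 0` for `h = ∑ ξᵢ cᵢ`; so `v (x (g • a)) = γ` on `D(h)`. Since `g ↦ g • a` is
multiplicative and `k`-points are dense (Nullstellensatz), the ratio attached to `p / q` is
well defined and does not depend on the representation.
-/

open TensorProduct

/-- The translate `g • f` of an element `f` of a bialgebra `A` by a `k`-point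
`g : A →ₐ[k] k`: the image of the comultiplication `Δ f ∈ A ⊗[k] A` under
`g ⊗ id` followed by the identification `k ⊗[k] A ≅ A`. -/
noncomputable def ptTranslate {k A : Type*} [CommSemiring k] [Semiring A]
    [Bialgebra k A] (g : A →ₐ[k] k) (f : A) : A :=
  (TensorProduct.lid k A)
    ((TensorProduct.map g.toLinearMap (LinearMap.id : A →ₗ[k] A))
      (Coalgebra.comul (R := k) f))

namespace Valuation

variable {k L Γ₀ : Type*} [Field k] [LinearOrderedCommGroupWithZero Γ₀]

section Ring

variable [Ring L] [Algebra k L] (v : Valuation L Γ₀) [v.IsTrivialOn k]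

theorem map_smul_of_ne_zero {c : k} (hc : c ≠ 0) (a : L) : v (c • a) = v a := by
  rw [Algebra.smul_def, map_mul, IsTrivialOn.eq_one c hc, one_mul]

variable (k)

def leSubmoduleOfIsTrivialOn (γ : Γ₀) : Submodule k L where
  __ := v.leAddSubgroup γ
  smul_mem' c a ha := by
    rcases eq_or_ne c 0 with rfl | hc
    · simp
    · simpa [map_smul_of_ne_zero v hc] using ha

def ltSubmoduleOfIsTrivialOn (γ : Γ₀ˣ) : Submodule k L where
  __ := v.ltAddSubgroup γ
  smul_mem' c a ha := by
    rcases eq_or_ne c 0 with rfl | hc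
    · simp
    · simpa [map_smul_of_ne_zero v hc] using ha

/-- The sublevel subspaces `{v ≤ γ}` at distinct values of `v` on `W` have distinct dimensions. -/
theorem finite_image_of_finiteDimensional (W : Submodule k L) [FiniteDimensional k W] :
    (v '' W).Finite := by
  let dim : Γ₀ → ℕ := fun γ => Module.finrank k ((v.leSubmoduleOfIsTrivialOn k γ).comap W.subtype)
  have hmono : StrictMonoOn dim (v '' W) := by
    rintro γ - _ ⟨w, hw, rfl⟩ hlt
    refine Submodule.finrank_lt_finrank_of_lt (lt_of_le_of_ne ?_ fun heq => ?_)
    · exact fun a (ha : v a ≤ γ) => (ha.trans hlt.le :)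
    · have hw' : (⟨w, hw⟩ : W) ∈ (v.leSubmoduleOfIsTrivialOn k (v w)).comap W.subtype :=
        (le_refl (v w) :)
      rw [← heq] at hw'
      exact hlt.not_ge hw'
  refine Set.Finite.of_finite_image ((Set.finite_Iic (Module.finrank k W)).subset ?_)
    hmono.injOn
  rintro _ ⟨γ, -, rfl⟩
  exact Submodule.finrank_le _

end Ring

variable [Field L] [Algebra k L] (v : Valuation L Γ₀) [v.IsTrivialOn k]
  {V : Type*} [AddCommGroup V] [Module k V] [FiniteDimensional k V]

/-- If `γ` is the largest value of `v ∘ Λ` on `S`, the points of `S` where it is not attained lie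
in the proper subspace `Λ⁻¹ {v < γ}`, which a linear form `ξ` cuts out. -/
theorem exists_dual_forall_apply_ne_zero_eq (Λ : V →ₗ[k] L) {S : Set V}
    (hS : ∃ s ∈ S, Λ s ≠ 0) :
    ∃ (ξ : Module.Dual k V) (γ : Γ₀), γ ≠ 0 ∧ (∃ s ∈ S, ξ s ≠ 0) ∧
      ∀ s ∈ S, ξ s ≠ 0 → v (Λ s) = γ := by
  obtain ⟨s₁, hs₁, hΛs₁⟩ := hS
  have hfin : ((fun s => v (Λ s)) '' S).Finite :=
    (v.finite_image_of_finiteDimensional k (LinearMap.range Λ)).subset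
      (Set.image_subset_iff.mpr fun s _ => ⟨Λ s, ⟨s, rfl⟩, rfl⟩)
  obtain ⟨s₀, hs₀, hmax⟩ := Set.Finite.exists_maximalFor' _ S hfin ⟨s₁, hs₁⟩
  have hle : ∀ s ∈ S, v (Λ s) ≤ v (Λ s₀) := fun s hs =>
    (le_total (v (Λ s)) (v (Λ s₀))).elim id (hmax hs)
  have hγ : v (Λ s₀) ≠ 0 :=
    ((v.pos_iff.mpr hΛs₁).trans_le (hle s₁ hs₁)).ne'
  let U := (v.ltSubmoduleOfIsTrivialOn k (Units.mk0 _ hγ)).comap Λ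
  obtain ⟨ξ, hξs₀, hUξ⟩ := Submodule.exists_le_ker_of_notMem (p := U) (v := s₀)
    (lt_irrefl (v (Λ s₀)))
  refine ⟨ξ, v (Λ s₀), hγ, ⟨s₀, hs₀, hξs₀⟩, fun s hs hξs => (hle s hs).antisymm ?_⟩
  exact not_lt.mp fun hlt => hξs (hUξ (show v (Λ s) < v (Λ s₀) from hlt))

end Valuation

theorem exists_forall_dual_apply_eq {k A ι : Type*} [CommSemiring k] [AddCommMonoid A]
    [Module k A] [Fintype ι] [DecidableEq ι] (a : ι → A) (ξ : Module.Dual k (ι → k)) :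
    ∃ h : A, ∀ g : Module.Dual k A, g h = ξ fun i => g (a i) :=
  ⟨∑ i, ξ (fun j => if i = j then 1 else 0) • a i, fun g => by
    rw [LinearMap.pi_apply_eq_sum_univ ξ, map_sum]
    exact Finset.sum_congr rfl fun i _ => by rw [map_smul, smul_eq_mul, smul_eq_mul, mul_comm]⟩

theorem Algebra.FiniteType.exists_algHom_apply_ne_zero {k A : Type*} [Field k] [IsAlgClosed k]
    [CommRing A] [IsReduced A] [Algebra k A] [Algebra.FiniteType k A] {a : A} (ha : a ≠ 0) :
    ∃ g : A →ₐ[k] k, g a ≠ 0 := by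
  have : IsJacobsonRing A := isJacobsonRing_of_finiteType (A := k)
  have ha' : a ∉ (⊥ : Ideal A).jacobson := by
    rwa [← Ideal.radical_eq_jacobson, Ideal.radical_bot_of_isReduced, Ideal.mem_bot]
  obtain ⟨m, ⟨-, hm⟩, ham⟩ : ∃ m : Ideal A, (⊥ ≤ m ∧ m.IsMaximal) ∧ a ∉ m := by
    simpa [Ideal.jacobson, Ideal.mem_sInf] using ha'
  let := Ideal.Quotient.field m
  have : Module.Finite k (A ⧸ m) := finite_of_finite_type_of_isJacobsonRing k (A ⧸ m)
  let e : k ≃ₐ[k] A ⧸ m :=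
    AlgEquiv.ofBijective (Algebra.ofId k _) IsAlgClosed.algebraMap_bijective_of_isIntegral
  refine ⟨(e.symm : A ⧸ m →ₐ[k] k).comp (Ideal.Quotient.mkₐ k m), ?_⟩
  simpa [Ideal.Quotient.eq_zero_iff_mem] using ham

namespace Valuation

variable {k A L Γ₀ : Type*} [Field k] [IsAlgClosed k] [CommRing A] [IsReduced A] [Algebra k A]
  [Algebra.FiniteType k A] [Field L] [Algebra k L] [LinearOrderedCommGroupWithZero Γ₀]
  (v : Valuation L Γ₀) [v.IsTrivialOn k]

/-- Write `t = ∑ cᵢ ⊗ bᵢ` over a basis `b` of `L`; then `(g ⊗ id) t = Λ (g (cᵢ))ᵢ` with `Λ`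
injective, and a `k`-point with `g cᵢ ≠ 0` shows that the maximal value of `v` is nonzero. -/
theorem exists_forall_apply_lid_rTensor_eq {t : A ⊗[k] L} (ht : t ≠ 0) :
    ∃ h : A, h ≠ 0 ∧ ∃ γ : Γ₀, γ ≠ 0 ∧
      ∀ g : A →ₐ[k] k, g h ≠ 0 → v (TensorProduct.lid k L (g.toLinearMap.rTensor L t)) = γ := by
  classical
  let b := Module.Free.chooseBasis k L
  let c := equivFinsuppOfBasisRight b t
  let Λ := Fintype.linearCombination k fun i : c.support => b i
  let coords : (A →ₐ[k] k) → c.support → k := fun g i => g (c i)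
  have ht' : t = ∑ i : c.support, c i ⊗ₜ[k] b i := by
    conv_lhs => rw [← (equivFinsuppOfBasisRight b).symm_apply_apply t]
    rw [equivFinsuppOfBasisRight_symm_apply, Finsupp.sum, ← Finset.sum_coe_sort]
  have hspec : ∀ g : A →ₐ[k] k,
      TensorProduct.lid k L (g.toLinearMap.rTensor L t) = Λ (coords g) := by
    intro g
    rw [ht']
    simp [Λ, coords, Fintype.linearCombination_apply]
  obtain ⟨i₀, hi₀⟩ : c.support.Nonempty := by simpa [c] using ht
  obtain ⟨g₀, hg₀⟩ : ∃ g : A →ₐ[k] k, g (c i₀) ≠ 0 :=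
    Algebra.FiniteType.exists_algHom_apply_ne_zero (Finsupp.mem_support_iff.mp hi₀)
  have hΛ : Function.Injective Λ := linearIndependent_iff_injective_fintypeLinearCombination.mp
    (b.linearIndependent.comp _ Subtype.val_injective)
  have hΛg₀ : Λ (coords g₀) ≠ 0 := fun h => hg₀ <| by
    simpa using congrFun (hΛ (h.trans (map_zero Λ).symm)) ⟨i₀, hi₀⟩
  obtain ⟨ξ, γ, hγ, ⟨-, ⟨g₁, rfl⟩, hξg₁⟩, hξ⟩ :=
    v.exists_dual_forall_apply_ne_zero_eq Λ ⟨_, Set.mem_range_self g₀, hΛg₀⟩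
  obtain ⟨h, hh⟩ := exists_forall_dual_apply_eq (fun i : c.support => c i) ξ
  refine ⟨h, fun h0 => hξg₁ ?_, γ, hγ, fun g hg => ?_⟩
  · simpa [h0] using (hh g₁.toLinearMap).symm
  · rw [hspec]
    exact hξ _ (Set.mem_range_self g) (by simpa using (hh g.toLinearMap).symm.trans_ne hg)

end Valuation

open WithConv Coalgebra in
/-- `χ = 1 ⊗ x` has the convolution inverse `χ ∘ S`, so `Φ (a ⊗ l) = ((· ⊗ 1) * χ ∘ S) a * (1 ⊗ l)`
sends `∑ f₍₁₎ ⊗ x f₍₂₎` to `((· ⊗ 1) * χ ∘ S * χ) f = f ⊗ 1`. -/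
theorem HopfAlgebra.lTensor_comul_injective {k A L : Type*} [Field k] [Ring A] [HopfAlgebra k A]
    [Ring L] [Nontrivial L] [Algebra k L] (x : A →ₐ[k] L) :
    Function.Injective (x.toLinearMap.lTensor A ∘ₗ comul) := by
  let ι₁ : WithConv (A →ₗ[k] A ⊗[k] L) :=
    toConv (Algebra.TensorProduct.includeLeft (S := k) : A →ₐ[k] A ⊗[k] L).toLinearMap
  let ρ : A →ₐ[k] A ⊗[k] L := Algebra.TensorProduct.includeRight.comp x
  let χ : WithConv (A →ₗ[k] A ⊗[k] L) := toConv ρ.toLinearMap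
  let χinv : WithConv (A →ₗ[k] A ⊗[k] L) := toConv (ρ.toLinearMap ∘ₗ antipode k)
  have hχinv : χinv * χ = 1 := by
    have := LinearMap.algHom_comp_convMul_distrib ρ (toConv (antipode k)) (toConv LinearMap.id)
    rw [LinearMap.antipode_mul_id] at this
    apply ofConv_injective
    refine this.symm.trans ?_
    ext a
    simp
  let Φ : A ⊗[k] L →ₗ[k] A ⊗[k] L :=
    LinearMap.mul' k _ ∘ₗ map (ι₁ * χinv).ofConv Algebra.TensorProduct.includeRight.toLinearMap
  have hΦ : Φ ∘ₗ x.toLinearMap.lTensor A ∘ₗ comul = ι₁.ofConv := by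
    have : Φ ∘ₗ x.toLinearMap.lTensor A =
        LinearMap.mul' k _ ∘ₗ map (ι₁ * χinv).ofConv χ.ofConv := by
      ext a b
      simp [Φ, χ, ρ]
    rw [← LinearMap.comp_assoc, this, LinearMap.comp_assoc,
      ← ofConv_toConv (LinearMap.mul' k _ ∘ₗ _), ← LinearMap.convMul_def, mul_assoc, hχinv, mul_one]
  refine .of_comp (f := Φ) ?_
  rw [← LinearMap.coe_comp, hΦ]
  exact Algebra.TensorProduct.includeLeft_injective (S := k) (algebraMap k L).injective

section Translate

open Coalgebra

variable {k A L : Type*} [CommSemiring k]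

theorem ptTranslate_mul [CommSemiring A] [Bialgebra k A] (g : A →ₐ[k] k) (a b : A) :
    ptTranslate g (a * b) = ptTranslate g a * ptTranslate g b := by
  let F : A ⊗[k] A →ₐ[k] A :=
    (Algebra.TensorProduct.lid k A).toAlgHom.comp (Algebra.TensorProduct.map g (AlgHom.id k A))
  have hF : ∀ t, TensorProduct.lid k A (map g.toLinearMap LinearMap.id t) = F t := fun t => by
    induction t using TensorProduct.induction_on <;> simp_all [F]
  simp only [ptTranslate, hF, Bialgebra.comul_mul, map_mul]

theorem AlgHom.apply_ptTranslate [Semiring A] [Bialgebra k A] [Semiring L] [Algebra k L]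
    (x : A →ₐ[k] L) (g : A →ₐ[k] k) (f : A) :
    x (ptTranslate g f) =
      TensorProduct.lid k L (g.toLinearMap.rTensor L (x.toLinearMap.lTensor A (comul f))) := by
  unfold ptTranslate
  induction comul (R := k) f using TensorProduct.induction_on <;> simp_all

end Translate

section Generic

variable {k A L Γ₀ : Type*} [Field k] [CommRing A] [HopfAlgebra k A] [Field L] [Algebra k L]
  [LinearOrderedCommGroupWithZero Γ₀] (v : Valuation L Γ₀) (x : A →ₐ[k] L)

def TranslateValuationEqOn (a h : A) (γ : Γ₀) : Prop :=
  ∀ g : A →ₐ[k] k, g h ≠ 0 → v (x (ptTranslate g a)) = γ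

variable {v x}

theorem TranslateValuationEqOn.mul {a b h h' : A} {γ γ' : Γ₀}
    (ha : TranslateValuationEqOn v x a h γ) (hb : TranslateValuationEqOn v x b h' γ') :
    TranslateValuationEqOn v x (a * b) (h * h') (γ * γ') := by
  intro g hg
  rw [map_mul, mul_ne_zero_iff] at hg
  rw [ptTranslate_mul, map_mul, map_mul, ha g hg.1, hb g hg.2]

theorem TranslateValuationEqOn.translate_ne_zero {a h : A} {γ : Γ₀}
    (ha : TranslateValuationEqOn v x a h γ) (hγ : γ ≠ 0) {g : A →ₐ[k] k} (hg : g h ≠ 0) :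
    x (ptTranslate g a) ≠ 0 := by
  rw [← v.ne_zero_iff, ha g hg]
  exact hγ

theorem TranslateValuationEqOn.div {a b h h' : A} {γ γ' : Γ₀}
    (ha : TranslateValuationEqOn v x a h γ) (hb : TranslateValuationEqOn v x b h' γ')
    (hγ' : γ' ≠ 0) {g : A →ₐ[k] k} (hg : g (h * h') ≠ 0) :
    x (ptTranslate g b) ≠ 0 ∧ v (x (ptTranslate g a)) / v (x (ptTranslate g b)) = γ / γ' := by
  rw [map_mul, mul_ne_zero_iff] at hg
  exact ⟨hb.translate_ne_zero hγ' hg.2, by rw [ha g hg.1, hb g hg.2]⟩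

variable [IsAlgClosed k] [IsDomain A] [Algebra.FiniteType k A]

theorem TranslateValuationEqOn.eq {a h h' : A} {γ γ' : Γ₀}
    (hγ : TranslateValuationEqOn v x a h γ) (hγ' : TranslateValuationEqOn v x a h' γ')
    (hh : h ≠ 0) (hh' : h' ≠ 0) : γ = γ' := by
  obtain ⟨g, hg⟩ := Algebra.FiniteType.exists_algHom_apply_ne_zero (k := k) (mul_ne_zero hh hh')
  rw [map_mul, mul_ne_zero_iff] at hg
  rw [← hγ g hg.1, hγ' g hg.2]

variable (v x) [v.IsTrivialOn k]

theorem exists_translateValuationEqOn {a : A} (ha : a ≠ 0) :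
    ∃ h : A, h ≠ 0 ∧ ∃ γ : Γ₀, γ ≠ 0 ∧ TranslateValuationEqOn v x a h γ := by
  obtain ⟨h, hh, γ, hγ, hv⟩ := v.exists_forall_apply_lid_rTensor_eq
    ((map_ne_zero_iff _ (HopfAlgebra.lTensor_comul_injective x)).mpr ha)
  exact ⟨h, hh, γ, hγ, fun g hg => (congrArg v (x.apply_ptTranslate g a)).trans (hv g hg)⟩

end Generic

/-- For a nonzero element `f = p / q` of `Frac A`, the value `‖x(g • p)‖ / ‖x(g • q)‖` is
constant for `g` in a nonempty Zariski-open set of `k`-points, and the common value is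
independent of the representation `f = p / q`. -/
theorem statement1
    {k A L : Type*} [Field k] [IsAlgClosed k]
    [CommRing A] [IsDomain A] [HopfAlgebra k A]
    (hfg : Algebra.FiniteType k A)
    [Field L] [Algebra k L]
    (v : L → NNReal)
    (hmul : ∀ a b : L, v (a * b) = v a * v b)
    (hadd : ∀ a b : L, v (a + b) ≤ max (v a) (v b))
    (hzero : ∀ a : L, v a = 0 ↔ a = 0)
    (htriv : ∀ c : k, c ≠ 0 → v (algebraMap k L c) = 1)
    (x : A →ₐ[k] L) (p q : A) (hp : p ≠ 0) (hq : q ≠ 0) :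
    ∃ h : A, h ≠ 0 ∧ (∃ g : A →ₐ[k] k, g h ≠ 0) ∧
      ∃ c : NNReal,
        (∀ g : A →ₐ[k] k, g h ≠ 0 →
          x (ptTranslate g q) ≠ 0 ∧
            v (x (ptTranslate g p)) / v (x (ptTranslate g q)) = c) ∧
        (∀ p' q' : A, q' ≠ 0 → p * q' = p' * q →
          ∃ h' : A, h' ≠ 0 ∧ (∃ g : A →ₐ[k] k, g h' ≠ 0) ∧
            ∀ g : A →ₐ[k] k, g h' ≠ 0 →
              x (ptTranslate g q') ≠ 0 ∧
                v (x (ptTranslate g p')) / v (x (ptTranslate g q')) = c) := by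
  let w : Valuation L NNReal :=
    { toFun := v
      map_zero' := (hzero 0).2 rfl
      map_one' := by simpa using htriv 1 one_ne_zero
      map_mul' := hmul
      map_add_le_max' := hadd }
  have : w.IsTrivialOn k := ⟨htriv⟩
  obtain ⟨hP, hP0, γp, -, hPv⟩ := exists_translateValuationEqOn w x hp
  obtain ⟨hQ, hQ0, γq, hγq, hQv⟩ := exists_translateValuationEqOn w x hq
  refine ⟨hP * hQ, mul_ne_zero hP0 hQ0,
    Algebra.FiniteType.exists_algHom_apply_ne_zero (mul_ne_zero hP0 hQ0), γp / γq,
    fun g hg => hPv.div hQv hγq hg, fun p' q' hq' hpq => ?_⟩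
  have hp' : p' ≠ 0 := by
    rintro rfl
    simp [hp, hq'] at hpq
  obtain ⟨hP', hP'0, γp', -, hP'v⟩ := exists_translateValuationEqOn w x hp'
  obtain ⟨hQ', hQ'0, γq', hγq', hQ'v⟩ := exists_translateValuationEqOn w x hq'
  have hcross : γp * γq' = γp' * γq :=
    (hPv.mul hQ'v).eq (hpq ▸ hP'v.mul hQv) (mul_ne_zero hP0 hQ'0) (mul_ne_zero hP'0 hQ0)
  refine ⟨hP' * hQ', mul_ne_zero hP'0 hQ'0,
    Algebra.FiniteType.exists_algHom_apply_ne_zero (mul_ne_zero hP'0 hQ'0), fun g hg => ?_⟩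
  rw [← (div_eq_div_iff hγq' hγq).mpr hcross.symm]
  exact hP'v.div hQ'v hγq' hg
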